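/- For every real number u with 0 < u < √2, there exists a unique real number v > 0 satisfying v²/u² = ∫_0^v t/(1 - e^{-t}) dt, where the integrand t/(1 - e^{-t}) is extended to take the value 1 at t = 0. Moreover, for u ≥ √2 no such v > 0 exists. -/

import Mathlib

open Real Set Filter Topology intervalIntegral

/-- The function `t ↦ t / (1 - e^{-t})`, extended continuously by the value `1` at `t = 0`. -/
noncomputable def F (t : ℝ) : ℝ := if t = 0 then 1 else t / (1 - Real.exp (-t))

lemma F_eq {t : ℝ} (ht : t ≠ 0) : F t = t / (1 - Real.exp (-t)) := if_neg ht

lemma F_zero : F 0 = 1 := if_pos rfl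

lemma denom_ne {t : ℝ} (ht : t ≠ 0) : 1 - Real.exp (-t) ≠ 0 := by
  intro h
  have h1 : Real.exp (-t) = 1 := by linarith
  rw [Real.exp_eq_one_iff] at h1
  exact ht (by linarith)

lemma denom_pos {t : ℝ} (ht : 0 < t) : 0 < 1 - Real.exp (-t) := by
  have := Real.exp_lt_one_iff.mpr (neg_lt_zero.mpr ht)
  linarith

lemma denom_lt_one {t : ℝ} : 1 - Real.exp (-t) < 1 := by
  have := Real.exp_pos (-t); linarith

lemma hasDerivAt_denom (x : ℝ) :
    HasDerivAt (fun t => 1 - Real.exp (-t)) (Real.exp (-x)) x := by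
  have h : HasDerivAt (fun t : ℝ => Real.exp (-t)) (-Real.exp (-x)) x := by
    exact ((Real.hasDerivAt_exp (-x)).comp x (hasDerivAt_neg x)).congr_deriv (by simp)
  exact ((hasDerivAt_const x (1:ℝ)).sub h).congr_deriv (by simp)

lemma F_cont : Continuous F := by
  rw [continuous_iff_continuousAt]
  intro x
  rcases ne_or_eq x 0 with hx | hx
  · have hcont : ContinuousAt (fun t => t / (1 - Real.exp (-t))) x :=
      continuousAt_id.div (by fun_prop) (denom_ne hx)
    apply hcont.congr
    filter_upwards [isOpen_ne.mem_nhds hx] with t ht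
    exact (F_eq ht).symm
  · subst hx
    have h1 : Tendsto (fun t => (1 - Real.exp (-t)) / t) (𝓝[≠] 0) (𝓝 1) := by
      have h := (hasDerivAt_iff_tendsto_slope.mp (hasDerivAt_denom 0))
      simp only [Real.exp_zero, neg_zero] at h
      refine h.congr fun t => ?_
      simp [slope_def_field, div_eq_mul_inv, mul_comm]
    have h2 : Tendsto F (𝓝[≠] 0) (𝓝 1) := by
      have := h1.inv₀ one_ne_zero
      rw [inv_one] at this
      refine this.congr' ?_
      filter_upwards [self_mem_nhdsWithin] with t ht
      rw [inv_div, F_eq ht]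
    rw [ContinuousAt, F_zero, ← nhdsNE_sup_pure]
    exact h2.sup (by simpa [F_zero] using tendsto_pure_nhds F 0)

noncomputable def G (v : ℝ) : ℝ := ∫ t in (0:ℝ)..v, F t

lemma G_cont : Continuous G :=
  intervalIntegral.continuous_primitive (fun a b => F_cont.intervalIntegrable a b) 0

lemma G_deriv (v : ℝ) : HasDerivAt G (F v) v :=
  intervalIntegral.integral_hasDerivAt_right (F_cont.intervalIntegrable 0 v)
    F_cont.aestronglyMeasurable.stronglyMeasurableAtFilter F_cont.continuousAt

lemma F_gt {t : ℝ} (ht : 0 < t) : t < F t := by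
  rw [F_eq (ne_of_gt ht), lt_div_iff₀ (denom_pos ht)]
  nlinarith [denom_lt_one (t := t), denom_pos ht]

lemma F_lt {t : ℝ} (ht : 0 < t) : F t < t + 1 := by
  rw [F_eq (ne_of_gt ht), div_lt_iff₀ (denom_pos ht)]
  have h := Real.add_one_lt_exp (ne_of_gt ht)
  have he : Real.exp (-t) * Real.exp t = 1 := by
    rw [← Real.exp_add]; simp
  nlinarith [Real.exp_pos (-t)]

lemma F_ge_one {t : ℝ} (ht : 0 ≤ t) : 1 ≤ F t := by
  rcases eq_or_lt_of_le ht with h | h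
  · rw [← h, F_zero]
  · rw [F_eq (ne_of_gt h), le_div_iff₀ (denom_pos h)]
    have := Real.add_one_le_exp (-t)
    linarith

lemma G_gt {v : ℝ} (hv : 0 < v) : v ^ 2 / 2 < G v := by
  have h : 0 < ∫ t in (0:ℝ)..v, (F t - t) := by
    apply intervalIntegral_pos_of_pos_on
      ((F_cont.sub continuous_id').intervalIntegrable 0 v)
      (fun x hx => by show 0 < F x - x; linarith [F_gt hx.1]) hv
  rw [intervalIntegral.integral_sub (F_cont.intervalIntegrable 0 v)
    (continuous_id'.intervalIntegrable 0 v)] at h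
  simp only [integral_id] at h
  unfold G; nlinarith

lemma G_lt {v : ℝ} (hv : 0 < v) : G v < v ^ 2 / 2 + v := by
  have h : 0 < ∫ t in (0:ℝ)..v, (t + 1 - F t) := by
    apply intervalIntegral_pos_of_pos_on
      (((continuous_id'.add continuous_const).sub F_cont).intervalIntegrable 0 v)
      (fun x hx => by show 0 < x + 1 - F x; linarith [F_lt hx.1]) hv
  rw [intervalIntegral.integral_sub (f := fun t : ℝ => t + 1)
    ((continuous_id'.add continuous_const).intervalIntegrable 0 v)
    (F_cont.intervalIntegrable 0 v),
    intervalIntegral.integral_add (continuous_id'.intervalIntegrable 0 v)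
      (continuous_const.intervalIntegrable 0 v)] at h
  simp only [integral_id, intervalIntegral.integral_const, smul_eq_mul] at h
  unfold G; nlinarith

lemma G_ge {v : ℝ} (hv : 0 < v) : v ≤ G v := by
  have h : 0 ≤ ∫ t in (0:ℝ)..v, (F t - 1) := by
    apply intervalIntegral.integral_nonneg hv.le
    exact fun x hx => by linarith [F_ge_one hx.1]
  rw [intervalIntegral.integral_sub (F_cont.intervalIntegrable 0 v)
    (continuous_const.intervalIntegrable 0 v)] at h
  simp only [intervalIntegral.integral_const, smul_eq_mul] at h
  unfold G; nlinarith

lemma F_hasDerivAt {x : ℝ} (hx : 0 < x) :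
    HasDerivAt F ((1 * (1 - Real.exp (-x)) - x * Real.exp (-x)) / (1 - Real.exp (-x)) ^ 2) x := by
  have h : HasDerivAt (fun t => t / (1 - Real.exp (-t)))
      ((1 * (1 - Real.exp (-x)) - x * Real.exp (-x)) / (1 - Real.exp (-x)) ^ 2) x :=
    (hasDerivAt_id x).div (hasDerivAt_denom x) (denom_ne (ne_of_gt hx))
  apply h.congr_of_eventuallyEq
  filter_upwards [isOpen_Ioi.mem_nhds hx] with t (ht : 0 < t)
  exact F_eq (ne_of_gt ht)

lemma psi_pos {v : ℝ} (hv : 0 < v) : v * F v < 2 * G v := by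
  set ψ : ℝ → ℝ := fun v => 2 * G v - v * F v with hψ
  have key : StrictMonoOn ψ (Ici 0) := by
    apply strictMonoOn_of_deriv_pos (convex_Ici 0)
    · exact ((continuous_const.mul G_cont).sub (continuous_id.mul F_cont)).continuousOn
    · intro x hx
      rw [interior_Ici] at hx
      have hx : 0 < x := hx
      have hd := denom_pos hx
      have hD : HasDerivAt ψ (2 * F x -
          (1 * F x + x * ((1 * (1 - Real.exp (-x)) - x * Real.exp (-x)) / (1 - Real.exp (-x)) ^ 2))) x :=
        ((G_deriv x).const_mul 2).sub ((hasDerivAt_id x).mul (F_hasDerivAt hx))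
      rw [hD.deriv]
      have hval : 2 * F x - (1 * F x + x * ((1 * (1 - Real.exp (-x)) - x * Real.exp (-x)) / (1 - Real.exp (-x)) ^ 2))
          = x ^ 2 * Real.exp (-x) / (1 - Real.exp (-x)) ^ 2 := by
        rw [F_eq (ne_of_gt hx)]
        field_simp
        ring
      rw [hval]
      positivity
  have h := key (self_mem_Ici) (le_of_lt hv : (0:ℝ) ≤ v) hv
  have hG0 : G 0 = 0 := intervalIntegral.integral_same
  simp only [hψ, hG0, F_zero] at h
  linarith

lemma theta_anti : StrictAntiOn (fun v => G v / v ^ 2) (Ioi (0:ℝ)) := by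
  apply strictAntiOn_of_deriv_neg (convex_Ioi 0)
  · exact ContinuousOn.div G_cont.continuousOn (continuousOn_pow 2)
      (fun x hx => pow_ne_zero 2 (ne_of_gt hx))
  · intro x hx
    rw [interior_Ioi] at hx
    have hx : 0 < x := hx
    have hD : HasDerivAt (fun v => G v / v ^ 2)
        ((F x * x ^ 2 - G x * (2 * x ^ 1)) / (x ^ 2) ^ 2) x :=
      (G_deriv x).div (hasDerivAt_pow 2 x) (pow_ne_zero 2 (ne_of_gt hx))
    rw [hD.deriv]
    apply div_neg_of_neg_of_pos
    · have := psi_pos hx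
      nlinarith [F_gt hx]
    · positivity

theorem stmt_11 :
    (∀ u : ℝ, 0 < u → u < Real.sqrt 2 →
      ∃! v : ℝ, 0 < v ∧ v ^ 2 / u ^ 2 = ∫ t in (0 : ℝ)..v, F t) ∧
    (∀ u : ℝ, Real.sqrt 2 ≤ u →
      ¬∃ v : ℝ, 0 < v ∧ v ^ 2 / u ^ 2 = ∫ t in (0 : ℝ)..v, F t) := by
  constructor
  · intro u hu hu2
    have hu2' : u ^ 2 < 2 := by
      have h := pow_lt_pow_left₀ hu2 hu.le (two_ne_zero)
      rwa [Real.sq_sqrt (by norm_num : (2:ℝ) ≥ 0)] at h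
    have hupos : 0 < u ^ 2 := pow_pos hu 2
    obtain ⟨h, hh⟩ : ∃ x : ℝ, x = 1 / u ^ 2 - 1 / 2 := ⟨_, rfl⟩
    have hhpos : 0 < h := by
      rw [hh]
      have : 1 / 2 < 1 / u ^ 2 := by
        rw [div_lt_div_iff₀ (by norm_num) hupos]; linarith
      linarith
    obtain ⟨a, ha_def⟩ : ∃ x : ℝ, x = u ^ 2 / 2 := ⟨_, rfl⟩
    obtain ⟨b, hb_def⟩ : ∃ x : ℝ, x = 1 / h + 1 := ⟨_, rfl⟩
    have ha : 0 < a := by rw [ha_def]; positivity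
    have hb1 : 1 < b := by
      have : 0 < 1 / h := by positivity
      rw [hb_def]; linarith
    have hab : a < b := by
      rw [ha_def]; linarith
    have hb0 : 0 < b := by linarith
    -- H a < 0
    have hHa : a ^ 2 / u ^ 2 - G a < 0 := by
      have h1 : a ≤ G a := G_ge ha
      have h2 : a ^ 2 / u ^ 2 = a / 2 := by
        rw [ha_def]; field_simp
      rw [h2]; linarith
    -- H b > 0
    have hHb : 0 < b ^ 2 / u ^ 2 - G b := by
      have h1 : G b < b ^ 2 / 2 + b := G_lt hb0
      have e1 : b ^ 2 / u ^ 2 = b ^ 2 * h + b ^ 2 / 2 := by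
        rw [hh]; ring
      have hbh : b * h = 1 + h := by
        rw [hb_def]; field_simp
      have e2 : b ^ 2 * h = b * (1 + h) := by rw [← hbh]; ring
      nlinarith [mul_pos hb0 hhpos]
    have hcont : Continuous (fun v => v ^ 2 / u ^ 2 - G v) :=
      ((continuous_pow 2).div_const _).sub G_cont
    have hivt := intermediate_value_Ioo (le_of_lt hab) hcont.continuousOn
    obtain ⟨v, hvmem, hveq⟩ := hivt ⟨hHa, hHb⟩
    have hv0 : 0 < v := lt_trans ha hvmem.1
    have hveq' : v ^ 2 / u ^ 2 = G v := by
      have : v ^ 2 / u ^ 2 - G v = 0 := hveq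
      linarith
    refine ⟨v, ⟨hv0, hveq'⟩, ?_⟩
    rintro y ⟨hy0, hyeq⟩
    have hyeq' : y ^ 2 / u ^ 2 = G y := hyeq
    have hty : G y / y ^ 2 = 1 / u ^ 2 := by
      rw [← hyeq']
      field_simp
    have htv : G v / v ^ 2 = 1 / u ^ 2 := by
      rw [← hveq']
      field_simp
    exact theta_anti.injOn hy0 hv0 (by rw [hty, htv])
  · intro u hu
    rintro ⟨v, hv, heq⟩
    have hs : (0:ℝ) < Real.sqrt 2 := Real.sqrt_pos.mpr (by norm_num)
    have hu2 : 2 ≤ u ^ 2 := by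
      have h := pow_le_pow_left₀ hs.le hu 2
      rwa [Real.sq_sqrt (by norm_num : (2:ℝ) ≥ 0)] at h
    have h1 : v ^ 2 / u ^ 2 ≤ v ^ 2 / 2 :=
      div_le_div_of_nonneg_left (by positivity) (by norm_num) hu2
    have h2 : v ^ 2 / 2 < G v := G_gt hv
    have : v ^ 2 / u ^ 2 = G v := heq
    linarith
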